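/- arXiv:2011.10870 — 8 statements merged into one kernel-verified Lean document; each statement's English description precedes it below -/
import Mathlib

section
/- Every sequence of n distinct real numbers can be partitioned into at most 2⌈√n⌉ subsequences, each of which is monotone (strictly increasing or strictly decreasing). -/
open Finset

section Aux

variable {n : ℕ} (a : Fin n → ℝ)

/-- Increasing chains inside `T` ending at `i`. -/
private noncomputable def chainsEnd (T : Finset (Fin n)) (i : Fin n) : Finset (Finset (Fin n)) :=
  T.powerset.filter (fun C => i ∈ C ∧ (∀ j ∈ C, j ≤ i) ∧ StrictMonoOn a (C : Set (Fin n)))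

private noncomputable def fF (T : Finset (Fin n)) (i : Fin n) : ℕ :=
  (chainsEnd a T i).sup Finset.card

private lemma singleton_mem_chainsEnd {T : Finset (Fin n)} {i : Fin n} (hi : i ∈ T) :
    {i} ∈ chainsEnd a T i := by
  refine mem_filter.mpr ⟨mem_powerset.mpr (singleton_subset_iff.mpr hi),
    mem_singleton_self i, ?_, ?_⟩
  · intro j hj; rw [mem_singleton] at hj; exact hj.le
  · intro x hx y hy hxy
    simp only [coe_singleton, Set.mem_singleton_iff] at hx hy
    subst hx; subst hy; exact absurd hxy (lt_irrefl _)

private lemma one_le_fF {T : Finset (Fin n)} {i : Fin n} (hi : i ∈ T) : 1 ≤ fF a T i := by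
  have h := Finset.le_sup (f := Finset.card) (singleton_mem_chainsEnd a hi)
  rw [card_singleton] at h; exact h

private lemma chainsEnd_nonempty {T : Finset (Fin n)} {i : Fin n} (hi : i ∈ T) :
    (chainsEnd a T i).Nonempty := ⟨{i}, singleton_mem_chainsEnd a hi⟩

private lemma fF_lt {T : Finset (Fin n)} {i j : Fin n} (hi : i ∈ T) (hj : j ∈ T)
    (hij : i < j) (hab : a i < a j) : fF a T i < fF a T j := by
  obtain ⟨C, hC, hCcard⟩ := Finset.exists_mem_eq_sup _ (chainsEnd_nonempty a hi) Finset.card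
  simp only [chainsEnd, mem_filter, mem_powerset] at hC
  obtain ⟨hCT, hiC, hCle, hCmono⟩ := hC
  have hjC : j ∉ C := fun h => absurd hij (not_lt.mpr (hCle j h))
  have hmono : StrictMonoOn a ((insert j C : Finset (Fin n)) : Set (Fin n)) := by
    intro x hx y hy hxy
    simp only [coe_insert, Set.mem_insert_iff, mem_coe] at hx hy
    rcases hy with rfl | hy
    · rcases hx with rfl | hx
      · exact absurd hxy (lt_irrefl _)
      · rcases eq_or_lt_of_le (hCle x hx) with rfl | hlt
        · exact hab
        · exact lt_trans (hCmono hx hiC hlt) hab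
    · rcases hx with rfl | hx
      · exact absurd (lt_trans (lt_of_le_of_lt (hCle y hy) hij) hxy) (lt_irrefl _)
      · exact hCmono hx hy hxy
  have hmem : insert j C ∈ chainsEnd a T j := by
    refine mem_filter.mpr ⟨mem_powerset.mpr (insert_subset hj hCT),
      mem_insert_self _ _, ?_, hmono⟩
    intro x hx
    rcases mem_insert.mp hx with rfl | hx
    · exact le_refl _
    · exact le_of_lt (lt_of_le_of_lt (hCle x hx) hij)
  calc fF a T i = C.card := hCcard
    _ < (insert j C).card := by rw [card_insert_of_notMem hjC]; omega
    _ ≤ fF a T j := Finset.le_sup hmem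

private lemma exists_chain {T : Finset (Fin n)} {i : Fin n} (hi : i ∈ T) {s : ℕ}
    (hs : s ≤ fF a T i) :
    ∃ C : Finset (Fin n), C ⊆ T ∧ s ≤ C.card ∧ StrictMonoOn a (C : Set (Fin n)) := by
  obtain ⟨C, hC, hCcard⟩ := Finset.exists_mem_eq_sup _ (chainsEnd_nonempty a hi) Finset.card
  simp only [chainsEnd, mem_filter, mem_powerset] at hC
  exact ⟨C, hC.1, hCcard ▸ hs, hC.2.2.2⟩

private lemma aux (ha : Function.Injective a) (s : ℕ) (hs : 1 ≤ s) (T : Finset (Fin n)) :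
    ∃ k, k ≤ T.card / s + s ∧ ∃ P : Fin k → Finset (Fin n),
      (∀ i j, i ≠ j → Disjoint (P i) (P j)) ∧
      (Finset.univ.biUnion P = T) ∧
      (∀ i, StrictMonoOn a (P i) ∨ StrictAntiOn a (P i)) := by
  induction T using Finset.strongInduction with
  | _ T ih =>
  by_cases hchain : ∃ i ∈ T, s ≤ fF a T i
  · -- extract a long increasing chain
    obtain ⟨i, hi, hfi⟩ := hchain
    obtain ⟨C, hCT, hCcard, hCmono⟩ := exists_chain a hi hfi
    have hCne : C.Nonempty := Finset.card_pos.mp (lt_of_lt_of_le hs hCcard)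
    have hss : T \ C ⊂ T := Finset.sdiff_ssubset hCT hCne
    obtain ⟨k', hk', P', hdisj', hbiU', hmono'⟩ := ih (T \ C) hss
    refine ⟨k' + 1, ?_, Fin.cons C P', ?_, ?_, ?_⟩
    · have h1 : (T \ C).card = T.card - C.card := card_sdiff_of_subset hCT
      have h2 : C.card ≤ T.card := card_le_card hCT
      have h3 : (T \ C).card ≤ T.card - s := by omega
      have h4 : (T \ C).card / s ≤ (T.card - s) / s := Nat.div_le_div_right h3
      have h5 : (T.card - s + s) / s = (T.card - s) / s + 1 := Nat.add_div_right _ hs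
      have h6 : T.card - s + s = T.card := Nat.sub_add_cancel (le_trans hCcard h2)
      rw [h6] at h5
      omega
    · intro i j hij
      have hsub : ∀ m, P' m ⊆ T \ C := fun m => hbiU' ▸ Finset.subset_biUnion_of_mem P' (mem_univ m)
      have hdC : ∀ m, Disjoint C (P' m) := fun m =>
        (Finset.disjoint_of_subset_right (hsub m) Finset.sdiff_disjoint.symm)
      induction i using Fin.cases with
      | zero =>
        induction j using Fin.cases with
        | zero => exact absurd rfl hij
        | succ j => simpa using hdC j
      | succ i =>
        induction j using Fin.cases with
        | zero => simpa using (hdC i).symm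
        | succ j =>
          simp only [Fin.cons_succ]
          exact hdisj' i j (fun h => hij (by rw [h]))
    · ext x
      simp only [Finset.mem_biUnion, Finset.mem_univ, true_and, Fin.exists_fin_succ,
        Fin.cons_zero, Fin.cons_succ]
      constructor
      · rintro (hx | ⟨i, hx⟩)
        · exact hCT hx
        · have : x ∈ T \ C := hbiU' ▸ Finset.mem_biUnion.mpr ⟨i, mem_univ i, hx⟩
          exact (Finset.mem_sdiff.mp this).1
      · intro hx
        by_cases hxC : x ∈ C
        · exact Or.inl hxC
        · have : x ∈ T \ C := Finset.mem_sdiff.mpr ⟨hx, hxC⟩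
          rw [← hbiU'] at this
          obtain ⟨i, _, hi⟩ := Finset.mem_biUnion.mp this
          exact Or.inr ⟨i, hi⟩
    · intro i
      induction i using Fin.cases with
      | zero => exact Or.inl hCmono
      | succ i => simpa using hmono' i
  · -- no long chain: level sets of fF are decreasing
    push_neg at hchain
    refine ⟨s, Nat.le_add_left s _, fun v => T.filter (fun i => fF a T i = v.val + 1), ?_, ?_, ?_⟩
    · intro i j hij
      rw [Finset.disjoint_left]
      intro x hxi hxj
      simp only [mem_filter] at hxi hxj
      exact hij (Fin.ext (by omega))
    · ext x
      simp only [Finset.mem_biUnion, Finset.mem_univ, true_and, mem_filter]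
      constructor
      · rintro ⟨v, hx, _⟩; exact hx
      · intro hx
        have h1 : 1 ≤ fF a T x := one_le_fF a hx
        have h2 : fF a T x < s := hchain x hx
        exact ⟨⟨fF a T x - 1, by omega⟩, hx, show fF a T x = (fF a T x - 1) + 1 by omega⟩
    · intro v
      right
      intro x hx y hy hxy
      simp only [coe_filter, Set.mem_setOf_eq] at hx hy
      obtain ⟨hxT, hfx⟩ := hx
      obtain ⟨hyT, hfy⟩ := hy
      rcases lt_trichotomy (a x) (a y) with h | h | h
      · exact absurd (fF_lt a hxT hyT hxy h) (by omega)
      · exact absurd (ha h) (ne_of_lt hxy)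
      · exact h

end Aux

/-- Every sequence of `n` distinct reals can be partitioned into at most `2⌈√n⌉`
monotone (strictly increasing or strictly decreasing) subsequences. -/
theorem partition_into_monotone (n : ℕ) (a : Fin n → ℝ) (ha : Function.Injective a) :
    ∃ k : ℕ, k ≤ 2 * ⌈Real.sqrt n⌉₊ ∧
      ∃ P : Fin k → Finset (Fin n),
        (∀ i j, i ≠ j → Disjoint (P i) (P j)) ∧
        (Finset.univ.biUnion P = Finset.univ) ∧
        (∀ i, StrictMonoOn a (P i) ∨ StrictAntiOn a (P i)) := by
  rcases Nat.eq_zero_or_pos n with rfl | hn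
  · refine ⟨0, by omega, Fin.elim0, fun i => i.elim0, ?_, fun i => i.elim0⟩
    ext x
    exact x.elim0
  · set s := ⌈Real.sqrt n⌉₊ with hsdef
    have hs : 1 ≤ s := Nat.ceil_pos.mpr (Real.sqrt_pos.mpr (by positivity))
    have hns : n ≤ s * s := by
      have h1 : Real.sqrt n ≤ (s : ℝ) := Nat.le_ceil _
      have h0 : (0:ℝ) ≤ Real.sqrt n := Real.sqrt_nonneg _
      have : (n : ℝ) ≤ (s : ℝ) * (s : ℝ) := by
        calc (n : ℝ) = Real.sqrt n * Real.sqrt n := (Real.mul_self_sqrt (by positivity)).symm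
          _ ≤ (s : ℝ) * (s : ℝ) := mul_le_mul h1 h1 h0 (le_trans h0 h1)
      exact_mod_cast this
    obtain ⟨k, hk, P, hP⟩ := aux a ha s hs Finset.univ
    refine ⟨k, ?_, P, hP⟩
    have hcard : (Finset.univ : Finset (Fin n)).card = n := Finset.card_univ.trans (Fintype.card_fin n)
    have hdiv : n / s ≤ s := by
      calc n / s ≤ s * s / s := Nat.div_le_div_right hns
        _ = s := Nat.mul_div_cancel_left s (by omega)
    rw [hcard] at hk
    omega
end

section
/- Greedy monotone decomposition bound: if at each step one removes a maximum-length monotone (increasing or decreasing) subsequence from a sequence of distinct reals, then starting from length n the process terminates after at most 2⌈√n⌉ steps. -/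
/-!
Erdős–Szekeres: labelling each element by the length of the longest increasing subsequence
ending at it, every level set is decreasing, so `m` distinct reals contain a monotone
subsequence of length `⌈√m⌉`. Hence a greedy step removes at least `⌈√m⌉` of the `m`
remaining elements, and two consecutive steps bring any size `m ≤ t²` down to at most
`(t - 1)²`; after `2⌈√n⌉` steps nothing is left.
-/

open Finset

theorem le_ceil_sqrt_iff {m t : ℕ} (hm : 0 < m) : t ≤ ⌈√(m : ℝ)⌉₊ ↔ (t - 1) ^ 2 < m := by
  have hpos : 1 ≤ ⌈√(m : ℝ)⌉₊ := Nat.one_le_ceil_iff.2 (by positivity)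
  rw [show t ≤ ⌈√(m : ℝ)⌉₊ ↔ t - 1 < ⌈√(m : ℝ)⌉₊ by omega, Nat.lt_ceil,
    Real.lt_sqrt (Nat.cast_nonneg _)]
  exact_mod_cast Iff.rfl

theorem le_ceil_sqrt_sq (m : ℕ) : m ≤ ⌈√(m : ℝ)⌉₊ ^ 2 := by
  have := (Real.sqrt_le_left (Nat.cast_nonneg _)).1 (Nat.le_ceil √(m : ℝ))
  exact_mod_cast this

namespace ErdosSzekeres

variable {ι α : Type*} [LinearOrder ι] [LinearOrder α] (f : ι → α) (S : Finset ι)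

open Classical in
noncomputable def increasingEndingAt (i : ι) : Finset (Finset ι) :=
  {t ∈ (S.filter (· ≤ i)).powerset | i ∈ t ∧ StrictMonoOn f t}

noncomputable def longestIncreasingEndingAt (i : ι) : ℕ :=
  (increasingEndingAt f S i).sup card

variable {f S}

theorem mem_increasingEndingAt {i : ι} {t : Finset ι} :
    t ∈ increasingEndingAt f S i ↔ t ⊆ S ∧ (∀ x ∈ t, x ≤ i) ∧ i ∈ t ∧ StrictMonoOn f t := by
  simp only [increasingEndingAt, mem_filter, mem_powerset, subset_iff]
  grind

theorem singleton_mem_increasingEndingAt {i : ι} (hi : i ∈ S) :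
    {i} ∈ increasingEndingAt f S i :=
  mem_increasingEndingAt.2 ⟨singleton_subset_iff.2 hi, by simp, mem_singleton_self i, by simp⟩

theorem one_le_longestIncreasingEndingAt {i : ι} (hi : i ∈ S) :
    1 ≤ longestIncreasingEndingAt f S i :=
  le_sup (f := card) (singleton_mem_increasingEndingAt hi)

variable (f) in
theorem exists_card_eq_longestIncreasingEndingAt {i : ι} (hi : i ∈ S) :
    ∃ t ∈ increasingEndingAt f S i, #t = longestIncreasingEndingAt f S i := by
  obtain ⟨t, ht, heq⟩ :=
    exists_mem_eq_sup (increasingEndingAt f S i) ⟨_, singleton_mem_increasingEndingAt hi⟩ card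
  exact ⟨t, ht, heq.symm⟩

theorem longestIncreasingEndingAt_lt {i j : ι} (hi : i ∈ S) (hj : j ∈ S) (hij : i < j)
    (hf : f i < f j) : longestIncreasingEndingAt f S i < longestIncreasingEndingAt f S j := by
  obtain ⟨t, ht, hcard⟩ := exists_card_eq_longestIncreasingEndingAt f hi
  obtain ⟨htS, hle, hit, hmono⟩ := mem_increasingEndingAt.1 ht
  have hjt : j ∉ t := fun h => (hle j h).not_gt hij
  have hext : insert j t ∈ increasingEndingAt f S j := by
    refine mem_increasingEndingAt.2 ⟨insert_subset hj htS, ?_, mem_insert_self j t, ?_⟩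
    · simp only [mem_insert, forall_eq_or_imp, le_refl, true_and]
      exact fun x hx => (hle x hx).trans hij.le
    · rw [coe_insert, strictMonoOn_insert_iff_of_forall_le fun x hx => (hle x hx).trans hij.le]
      exact ⟨fun x hx _ => (hmono.monotoneOn hx hit (hle x hx)).trans_lt hf, hmono⟩
  calc longestIncreasingEndingAt f S i < #(insert j t) := by
        rw [card_insert_of_notMem hjt, hcard]; omega
    _ ≤ longestIncreasingEndingAt f S j := le_sup (f := card) hext

theorem strictAntiOn_fiber_longestIncreasingEndingAt (hf : Set.InjOn f S) (k : ℕ) :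
    StrictAntiOn f ↑({j ∈ S | longestIncreasingEndingAt f S j = k} : Finset ι) := by
  intro i hi j hj hij
  simp only [coe_filter, Set.mem_ofPred_eq] at hi hj
  refine lt_of_le_of_ne (not_lt.1 fun hlt => ?_) fun heq => hij.ne' (hf hj.1 hi.1 heq)
  exact (longestIncreasingEndingAt_lt hi.1 hj.1 hij hlt).ne (hi.2.trans hj.2.symm)

theorem exists_strictMonoOn_or_strictAntiOn {r s : ℕ} (hf : Set.InjOn f S) (hS : r * s < #S) :
    (∃ t ⊆ S, r < #t ∧ StrictMonoOn f t) ∨ (∃ t ⊆ S, s < #t ∧ StrictAntiOn f t) := by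
  by_cases hlong : ∃ i ∈ S, r < longestIncreasingEndingAt f S i
  · obtain ⟨i, hi, hr⟩ := hlong
    obtain ⟨t, ht, hcard⟩ := exists_card_eq_longestIncreasingEndingAt f hi
    obtain ⟨htS, -, -, hmono⟩ := mem_increasingEndingAt.1 ht
    exact Or.inl ⟨t, htS, hcard ▸ hr, hmono⟩
  push Not at hlong
  have hmaps : ∀ i ∈ S, longestIncreasingEndingAt f S i ∈ Icc 1 r := fun i hi =>
    mem_Icc.2 ⟨one_le_longestIncreasingEndingAt hi, hlong i hi⟩
  obtain ⟨k, -, hk⟩ := exists_lt_card_fiber_of_mul_lt_card_of_maps_to hmaps (by simpa using hS)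
  exact Or.inr ⟨_, filter_subset _ S, hk, strictAntiOn_fiber_longestIncreasingEndingAt hf k⟩

theorem exists_monotone_subset_ceil_sqrt_le_card (hf : Set.InjOn f S) (hS : S.Nonempty) :
    ∃ M ⊆ S, (StrictMonoOn f M ∨ StrictAntiOn f M) ∧ ⌈√(#S : ℝ)⌉₊ ≤ #M := by
  have hlt : (⌈√(#S : ℝ)⌉₊ - 1) * (⌈√(#S : ℝ)⌉₊ - 1) < #S := by
    rw [← sq]
    exact (le_ceil_sqrt_iff hS.card_pos).1 le_rfl
  rcases exists_strictMonoOn_or_strictAntiOn hf hlt with ⟨M, hMS, hM, hmono⟩ | ⟨M, hMS, hM, hanti⟩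
  · exact ⟨M, hMS, Or.inl hmono, by omega⟩
  · exact ⟨M, hMS, Or.inr hanti, by omega⟩

end ErdosSzekeres

theorem le_pred_sq_of_le_sub_ceil_sqrt {m₀ m₁ m₂ t : ℕ} (h₀ : m₀ ≤ t ^ 2)
    (h₁ : m₁ ≤ m₀ - ⌈√(m₀ : ℝ)⌉₊) (h₂ : m₂ ≤ m₁ - ⌈√(m₁ : ℝ)⌉₊) : m₂ ≤ (t - 1) ^ 2 := by
  by_cases hsmall : m₁ ≤ (t - 1) ^ 2
  · omega
  have ht₁ : t ≤ ⌈√(m₁ : ℝ)⌉₊ := (le_ceil_sqrt_iff (by omega)).2 (by omega)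
  have ht₀ : t ≤ ⌈√(m₀ : ℝ)⌉₊ :=
    ht₁.trans (Nat.ceil_mono (Real.sqrt_le_sqrt (by exact_mod_cast (by omega : m₁ ≤ m₀))))
  obtain rfl | ⟨u, rfl⟩ : t = 0 ∨ ∃ u, t = u + 1 := by rcases t with _ | u <;> simp
  · simp at h₀
    omega
  have hsq : (u + 1) ^ 2 + 1 = u ^ 2 + 2 * (u + 1) := by ring
  simp only [Nat.add_sub_cancel] at hsmall ⊢
  omega

theorem eq_zero_of_le_sub_ceil_sqrt (m : ℕ → ℕ) (hm : ∀ i, m (i + 1) ≤ m i - ⌈√(m i : ℝ)⌉₊) :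
    m (2 * ⌈√(m 0 : ℝ)⌉₊) = 0 := by
  set t := ⌈√(m 0 : ℝ)⌉₊
  have hsq : ∀ k, m (2 * k) ≤ (t - k) ^ 2 := by
    intro k
    induction k with
    | zero => exact le_ceil_sqrt_sq (m 0)
    | succ k ih =>
      rw [Nat.sub_succ]
      exact le_pred_sq_of_le_sub_ceil_sqrt ih (hm (2 * k)) (hm (2 * k + 1))
  simpa using hsq t

/-- Greedy monotone decomposition: repeatedly removing a maximum-length monotone
subsequence from a sequence of `n` distinct reals empties it in at most `2⌈√n⌉` steps. -/
theorem greedy_monotone_decomposition (n : ℕ) (a : Fin n → ℝ) (ha : Function.Injective a)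
    (R : ℕ → Finset (Fin n)) (hR0 : R 0 = Finset.univ)
    (hstep : ∀ i, (R i = ∅ → R (i + 1) = ∅) ∧
      (R i ≠ ∅ → ∃ M : Finset (Fin n), M ⊆ R i ∧
        (StrictMonoOn a ↑M ∨ StrictAntiOn a ↑M) ∧
        (∀ M' : Finset (Fin n), M' ⊆ R i →
          (StrictMonoOn a ↑M' ∨ StrictAntiOn a ↑M') → M'.card ≤ M.card) ∧
        R (i + 1) = R i \ M)) :
    R (2 * ⌈Real.sqrt n⌉₊) = ∅ := by
  have hshrink : ∀ i, #(R (i + 1)) ≤ #(R i) - ⌈√(#(R i) : ℝ)⌉₊ := by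
    intro i
    obtain ⟨hempty, hnonempty⟩ := hstep i
    rcases (R i).eq_empty_or_nonempty with h | h
    · simp [hempty h]
    obtain ⟨M, hMR, -, hmax, hnext⟩ := hnonempty h.ne_empty
    obtain ⟨M', hM'R, hM', hcard⟩ :=
      ErdosSzekeres.exists_monotone_subset_ceil_sqrt_le_card ha.injOn h
    rw [hnext, card_sdiff_of_subset hMR]
    exact Nat.sub_le_sub_left (hcard.trans (hmax M' hM'R hM')) _
  simpa [hR0] using eq_zero_of_le_sub_ceil_sqrt (fun i => #(R i)) hshrink
end

section
/- If a process removes, at each step, at least ⌈√m⌉ elements from a set of current size m (stopping when the set is empty), then starting from n elements the process terminates in at most 2⌈√n⌉ steps. -/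
lemma ceil_sqrt_le_iff (m t : ℕ) : ⌈Real.sqrt m⌉₊ ≤ t ↔ m ≤ t ^ 2 := by
  rw [Nat.ceil_le, Real.sqrt_le_left]
  · exact_mod_cast Iff.rfl
  · positivity

lemma aux_s6 : ∀ n : ℕ, ∀ k, ∀ m : ℕ → ℕ, m 0 = n → m k = 0 →
    (∀ i < k, m (i + 1) < m i) → (∀ i < k, m (i + 1) ≤ m i - ⌈Real.sqrt (m i)⌉₊) →
    k ≤ 2 * ⌈Real.sqrt n⌉₊ := by
  intro n
  induction n using Nat.strong_induction_on with
  | _ n ih =>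
    intro k m hm0 hmk hdec hstep
    match k with
    | 0 => exact Nat.zero_le _
    | 1 =>
      have h1 : m 1 < m 0 := hdec 0 one_pos
      have hn1 : 1 ≤ n := by omega
      have : 1 ≤ ⌈Real.sqrt n⌉₊ := by
        by_contra h
        have := (ceil_sqrt_le_iff n 0).mp (by omega)
        omega
      omega
    | (k + 2) =>
      obtain ⟨c, hc⟩ : ∃ c, ⌈Real.sqrt n⌉₊ = c := ⟨_, rfl⟩
      have hnc : n ≤ c ^ 2 := (ceil_sqrt_le_iff n c).mp hc.le
      have h10 : m 1 < m 0 := hdec 0 (by omega)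
      have hn1 : 1 ≤ n := by omega
      have hc1 : 1 ≤ c := by
        by_contra h
        have := (ceil_sqrt_le_iff n 0).mp (by omega)
        omega
      have h21 : m 2 < m 1 := show m (1 + 1) < m 1 from hdec 1 (by omega)
      -- key: m 2 ≤ (c-1)^2
      have hm2 : m 2 ≤ (c - 1) ^ 2 := by
        by_cases h1 : m 1 ≤ (c - 1) ^ 2
        · omega
        · have hge : c ≤ ⌈Real.sqrt (m 1)⌉₊ := by
            by_contra h
            exact h1 ((ceil_sqrt_le_iff (m 1) (c - 1)).mp (by omega))
          have hs0 : m 1 ≤ n - c := by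
            have := hstep 0 (by omega); rw [hm0, hc] at this; exact this
          have hs1 : m 2 ≤ m 1 - ⌈Real.sqrt (m 1)⌉₊ :=
            show m (1 + 1) ≤ _ from hstep 1 (by omega)
          have hs1' : m 2 ≤ m 1 - c := le_trans hs1 (Nat.sub_le_sub_left hge _)
          obtain ⟨d, rfl⟩ : ∃ d, c = d + 1 := ⟨c - 1, by omega⟩
          have e1 : n ≤ d * d + 2 * d + 1 := by nlinarith [hnc]
          have e2 : (d + 1 - 1) ^ 2 = d * d := by simp [pow_two]
          rw [e2]
          set D := d * d
          omega
      have hlt : m 2 < n := by omega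
      have hk : k ≤ 2 * ⌈Real.sqrt (m 2)⌉₊ :=
        ih (m 2) hlt k (fun i => m (i + 2)) rfl hmk
          (fun i hi => hdec (i + 2) (by omega))
          (fun i hi => hstep (i + 2) (by omega))
      have : ⌈Real.sqrt (m 2)⌉₊ ≤ c - 1 := (ceil_sqrt_le_iff _ _).mpr hm2
      omega

/-- If a process removes at least `⌈√m⌉` elements from a current set of size `m` at
each step, then starting from `n` elements it terminates in at most `2⌈√n⌉` steps. -/
theorem steps_le_two_ceil_sqrt (n k : ℕ) (m : ℕ → ℕ) (hm0 : m 0 = n) (hmk : m k = 0)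
    (hdec : ∀ i < k, m (i + 1) < m i)
    (hstep : ∀ i < k, m (i + 1) ≤ m i - ⌈Real.sqrt (m i)⌉₊) :
    k ≤ 2 * ⌈Real.sqrt n⌉₊ := by
  exact aux_s6 n k m hm0 hmk hdec hstep
end

section
/- If a process removes at each step a constant fraction c (0 < c ≤ 1) of a maximum monotone subsequence, i.e., deletes at least ⌈c·√m⌉ elements from a current set of size m ≥ 1, then the number of steps to reach the empty set from size n is at most (2/c)·⌈√n⌉. -/
private lemma sqrt_gap (c a b : ℝ) (hc0 : 0 < c) (hc1 : c ≤ 1) (ha : 1 ≤ a)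
    (hb : 0 ≤ b) (h : b ≤ a - c * Real.sqrt a) :
    Real.sqrt b + c / 2 ≤ Real.sqrt a := by
  have ha0 : (0:ℝ) ≤ a := by linarith
  set sa := Real.sqrt a with hsa
  set sb := Real.sqrt b with hsb
  have hsa2 : sa ^ 2 = a := Real.sq_sqrt ha0
  have hsb2 : sb ^ 2 = b := Real.sq_sqrt hb
  have hsa1 : 1 ≤ sa := by
    rw [hsa, show (1:ℝ) = Real.sqrt 1 by simp]
    exact Real.sqrt_le_sqrt ha
  have hsb0 : 0 ≤ sb := Real.sqrt_nonneg b
  have hba : sb ≤ sa := Real.sqrt_le_sqrt (by nlinarith)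
  nlinarith [mul_le_mul_of_nonneg_left hba (le_of_lt hc0)]

/-- If a process removes at least `⌈c·√m⌉` elements from a current set of size `m` at
each step, where `0 < c ≤ 1`, then starting from `n` elements the number of steps is
at most `⌈(2/c)·√n⌉`. -/
theorem steps_le_two_div_c_ceil_sqrt (c : ℝ) (hc0 : 0 < c) (hc1 : c ≤ 1)
    (n k : ℕ) (m : ℕ → ℕ) (hm0 : m 0 = n) (hmk : m k = 0)
    (hdec : ∀ i < k, m (i + 1) < m i)
    (hstep : ∀ i < k, m (i + 1) ≤ m i - ⌈c * Real.sqrt (m i)⌉₊) :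
    k ≤ ⌈(2 / c) * Real.sqrt n⌉₊ := by
  -- step inequality on square roots
  have step : ∀ i < k, Real.sqrt (m (i+1)) + c / 2 ≤ Real.sqrt (m i) := by
    intro i hi
    have hlt := hdec i hi
    have h1 : 1 ≤ m i := by omega
    have h1' : (1:ℝ) ≤ (m i : ℝ) := by exact_mod_cast Nat.one_le_of_lt hlt
    set t := ⌈c * Real.sqrt (m i)⌉₊ with ht
    by_cases hcase : t ≤ m i
    · have hcast : (m (i+1) : ℝ) ≤ (m i : ℝ) - c * Real.sqrt (m i) := by
        have := hstep i hi
        have h2 : (m (i+1) : ℝ) ≤ (m i : ℝ) - (t : ℝ) := by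
          have : (m (i+1) : ℝ) ≤ ((m i - t : ℕ) : ℝ) := by exact_mod_cast this
          rwa [Nat.cast_sub hcase] at this
        have h3 : c * Real.sqrt (m i) ≤ (t : ℝ) :=
          Nat.le_ceil _
        linarith
      exact sqrt_gap c (m i) (m (i+1)) hc0 hc1 h1' (Nat.cast_nonneg _) hcast
    · have hz : m (i+1) = 0 := by
        have := hstep i hi
        omega
      rw [hz]
      simp only [Nat.cast_zero, Real.sqrt_zero, zero_add]
      have : (1:ℝ) ≤ Real.sqrt (m i) := by
        rw [show (1:ℝ) = Real.sqrt 1 by simp]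
        exact Real.sqrt_le_sqrt h1'
      linarith
  -- telescoping
  have main : ∀ d, d ≤ k → (d : ℝ) * (c / 2) ≤ Real.sqrt (m (k - d)) := by
    intro d
    induction d with
    | zero => intro _; simp [hmk]
    | succ d ih =>
      intro hd
      have hdk : d ≤ k := Nat.le_of_succ_le hd
      have hj : k - d = (k - (d+1)) + 1 := by omega
      have hjk : k - (d+1) < k := by omega
      have := step (k - (d+1)) hjk
      have ihd := ih hdk
      rw [hj] at ihd
      push_cast
      linarith
  have hk := main k le_rfl
  simp only [Nat.sub_self, hm0] at hk
  have h2c : (k : ℝ) ≤ (2 / c) * Real.sqrt n := by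
    rw [div_mul_eq_mul_div, le_div_iff₀ hc0]
    linarith
  calc (k:ℕ) ≤ ⌈(2 / c) * Real.sqrt n⌉₊ := by
        have := Nat.le_ceil ((2 / c) * Real.sqrt n)
        exact_mod_cast h2c.trans this
end

section
/- For any assignment of non-negative values to grid cells and any chain of pairwise non-conflicting segments, there exists a monotone (up/right) lattice path from corner to corner whose total value is at least the sum of the values of all cells covered by the segments in the chain. -/
/-!
The cells covered by a non-conflicting chain of segments are totally ordered in the
componentwise order, and a monotone path can pass through every cell of such a chain.
Index the path by the antidiagonal `t = row + column` of the grid `{0, …, n}²`; at time `t`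
it sits in row `max (t - n) (sup_q min q.1 (t - q.2))`.  This row moves up by at most one per
step, and at time `q.1 + q.2` it equals `q.1` because every other cell of the chain lies
weakly below-left or weakly above-right of `q`.  Since the path visits distinct cells and the
weights are non-negative, it collects at least the weight of the chain.
-/

/-- A segment: a nonempty consecutive run of cells within a single row or column
of an `m × m` grid. -/
def IsSegment (m : ℕ) (S : Finset (Fin m × Fin m)) : Prop :=
  S.Nonempty ∧
    ((∃ r lo hi : Fin m, S = (Finset.Icc lo hi).image fun c => (r, c)) ∨
     (∃ c lo hi : Fin m, S = (Finset.Icc lo hi).image fun r => (r, c)))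

/-- `A` precedes `B`: every cell of `A` is strictly higher and strictly to the
right of every cell of `B`. -/
def Precedes (m : ℕ) (A B : Finset (Fin m × Fin m)) : Prop :=
  ∀ p ∈ A, ∀ q ∈ B, q.1 < p.1 ∧ q.2 < p.2

/-- A monotone lattice path: starts at the bottom-left corner `(0,0)`, ends at the
top-right corner `(m-1, m-1)`, and each step increases exactly one coordinate by 1. -/
def IsMonotonePath (m k : ℕ) (p : Fin (k + 1) → Fin m × Fin m) : Prop :=
  (p 0).1.val = 0 ∧ (p 0).2.val = 0 ∧
  (p (Fin.last k)).1.val = m - 1 ∧ (p (Fin.last k)).2.val = m - 1 ∧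
  ∀ i : Fin k,
    ((p i.succ).1.val = (p i.castSucc).1.val + 1 ∧ (p i.succ).2 = (p i.castSucc).2) ∨
    ((p i.succ).1 = (p i.castSucc).1 ∧ (p i.succ).2.val = (p i.castSucc).2.val + 1)

open Finset Function

theorem IsSegment.isChain {m : ℕ} {S : Finset (Fin m × Fin m)} (hS : IsSegment m S) :
    IsChain (· ≤ ·) (S : Set (Fin m × Fin m)) := by
  obtain ⟨-, ⟨r, lo, hi, rfl⟩ | ⟨c, lo, hi, rfl⟩⟩ := hS
  all_goals
    rintro _ hx _ hy -
    obtain ⟨i, -, rfl⟩ := mem_image.mp hx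
    obtain ⟨j, -, rfl⟩ := mem_image.mp hy
    rcases le_total i j with h | h <;> simp [Prod.le_def, h]

theorem Precedes.le {m : ℕ} {A B : Finset (Fin m × Fin m)} (h : Precedes m A B)
    {p q : Fin m × Fin m} (hp : p ∈ A) (hq : q ∈ B) : q ≤ p :=
  Prod.le_def.mpr ⟨(h p hp q hq).1.le, (h p hp q hq).2.le⟩

theorem isChain_sup_of_precedes {m : ℕ} {F : Finset (Finset (Fin m × Fin m))}
    (hseg : ∀ A ∈ F, IsSegment m A)
    (hpair : ∀ A ∈ F, ∀ B ∈ F, A ≠ B → Precedes m A B ∨ Precedes m B A) :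
    IsChain (· ≤ ·) ((F.sup id : Finset (Fin m × Fin m)) : Set (Fin m × Fin m)) := by
  intro x hx y hy hxy
  obtain ⟨A, hA, hxA⟩ := mem_sup.mp hx
  obtain ⟨B, hB, hyB⟩ := mem_sup.mp hy
  by_cases hAB : A = B
  · subst hAB
    exact (hseg A hA).isChain hxA hyB hxy
  · rcases hpair A hA B hB hAB with h | h
    · exact Or.inr (h.le hxA hyB)
    · exact Or.inl (h.le hyB hxA)

/-- Row functions of monotone paths in an `(n + 1) × (n + 1)` grid, indexed by the antidiagonal. -/
structure IsStaircase (n : ℕ) (a : ℕ → ℕ) : Prop where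
  zero : a 0 = 0
  last : a (2 * n) = n
  mono : ∀ t, a t ≤ a (t + 1)
  step : ∀ t, a (t + 1) ≤ a t + 1

def staircasePath (n : ℕ) (a : ℕ → ℕ) (i : Fin (2 * n + 1)) : Fin (n + 1) × Fin (n + 1) :=
  (Fin.ofNat (n + 1) (a i), Fin.ofNat (n + 1) (i - a i))

namespace IsStaircase

variable {n : ℕ} {a : ℕ → ℕ} (ha : IsStaircase n a)
include ha

theorem apply_add_le (t d : ℕ) : a (t + d) ≤ a t + d := by
  induction d with
  | zero => rfl
  | succ d ih => exact (ha.step (t + d)).trans (by omega)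

theorem apply_le (t : ℕ) : a t ≤ t := by
  simpa [ha.zero] using ha.apply_add_le 0 t

theorem apply_le_of_le_two_mul {t : ℕ} (ht : t ≤ 2 * n) : a t ≤ n :=
  ha.last ▸ monotone_nat_of_le_succ ha.mono ht

theorem sub_apply_le_of_le_two_mul {t : ℕ} (ht : t ≤ 2 * n) : t - a t ≤ n := by
  have := ha.apply_add_le t (2 * n - t)
  rw [Nat.add_sub_cancel' ht, ha.last] at this
  omega

theorem val_staircasePath_fst (i : Fin (2 * n + 1)) : (staircasePath n a i).1.val = a i :=
  Nat.mod_eq_of_lt (Nat.lt_succ_of_le (ha.apply_le_of_le_two_mul (Nat.le_of_lt_succ i.isLt)))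

theorem val_staircasePath_snd (i : Fin (2 * n + 1)) : (staircasePath n a i).2.val = i - a i :=
  Nat.mod_eq_of_lt (Nat.lt_succ_of_le (ha.sub_apply_le_of_le_two_mul (Nat.le_of_lt_succ i.isLt)))

theorem isMonotonePath : IsMonotonePath (n + 1) (2 * n) (staircasePath n a) := by
  simp only [IsMonotonePath, Fin.ext_iff, ha.val_staircasePath_fst, ha.val_staircasePath_snd,
    Fin.val_succ, Fin.val_castSucc]
  refine ⟨ha.zero, by simp [ha.zero], by simp [ha.last], by simp [ha.last]; omega, fun i => ?_⟩
  have := ha.mono i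
  have := ha.step i
  have := ha.apply_le i
  omega

theorem injective_staircasePath : Injective (staircasePath n a) := by
  intro i j h
  have h1 := congrArg (fun q => q.1.val) h
  have h2 := congrArg (fun q => q.2.val) h
  simp only [ha.val_staircasePath_fst, ha.val_staircasePath_snd] at h1 h2
  have := ha.apply_le i
  have := ha.apply_le j
  exact Fin.ext (by omega)

theorem mem_range_staircasePath {q : Fin (n + 1) × Fin (n + 1)} (hq : a (q.1 + q.2) = q.1) :
    q ∈ Set.range (staircasePath n a) := by
  refine ⟨⟨q.1 + q.2, by omega⟩, Prod.ext (Fin.ext ?_) (Fin.ext ?_)⟩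
  · rw [ha.val_staircasePath_fst, hq]
  · rw [ha.val_staircasePath_snd, hq]
    exact Nat.add_sub_cancel_left _ _

end IsStaircase

def chainRow (n : ℕ) (T : Finset (Fin (n + 1) × Fin (n + 1))) (t : ℕ) : ℕ :=
  max (t - n) (T.sup fun q => min q.1.val (t - q.2.val))

theorem min_le_chainRow {n : ℕ} {T : Finset (Fin (n + 1) × Fin (n + 1))}
    {q : Fin (n + 1) × Fin (n + 1)} (hq : q ∈ T) (t : ℕ) :
    min q.1.val (t - q.2.val) ≤ chainRow n T t :=
  (le_sup (f := fun q : Fin (n + 1) × Fin (n + 1) => min q.1.val (t - q.2.val)) hq).trans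
    (le_max_right _ _)

theorem isStaircase_chainRow (n : ℕ) (T : Finset (Fin (n + 1) × Fin (n + 1))) :
    IsStaircase n (chainRow n T) where
  zero := by simp [chainRow]
  last := le_antisymm
    (max_le (by omega) (Finset.sup_le fun q _ =>
      (min_le_left _ _).trans (Nat.le_of_lt_succ q.1.isLt)))
    ((by omega : n ≤ 2 * n - n).trans (le_max_left _ _))
  mono t := max_le_max (by omega) (sup_mono_fun fun q _ => min_le_min le_rfl (by omega))
  step t := by
    refine max_le (le_trans (by omega) (Nat.succ_le_succ (le_max_left _ _)))
      (Finset.sup_le fun q hq => ?_)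
    have := min_le_chainRow hq t
    omega

theorem chainRow_add_eq {n : ℕ} {T : Finset (Fin (n + 1) × Fin (n + 1))}
    (hT : IsChain (· ≤ ·) (T : Set (Fin (n + 1) × Fin (n + 1))))
    {q : Fin (n + 1) × Fin (n + 1)} (hq : q ∈ T) : chainRow n T (q.1 + q.2) = q.1 := by
  refine le_antisymm (max_le (by omega) (Finset.sup_le fun y hy => ?_)) ?_
  · rcases hT.total hq hy with h | h <;>
      · rw [Prod.le_def, Fin.le_iff_val_le_val, Fin.le_iff_val_le_val] at h
        omega
  · have := min_le_chainRow hq (q.1 + q.2)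
    omega

theorem Finset.sum_le_sum_comp_of_subset_range {ι α M : Type*} [Fintype ι] [AddCommMonoid M]
    [Preorder M] [CanonicallyOrderedAdd M] (w : α → M) {p : ι → α} (hp : Injective p)
    {T : Finset α} (hT : (T : Set α) ⊆ Set.range p) :
    ∑ q ∈ T, w q ≤ ∑ i, w (p i) := by
  classical
  calc ∑ q ∈ T, w q ≤ ∑ q ∈ univ.image p, w q :=
        sum_le_sum_of_subset fun q hq => by simpa using hT hq
    _ = ∑ i, w (p i) := sum_image hp.injOn

/-- For any non-negative weights and any pairwise non-conflicting chain of segments,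
some monotone lattice path collects at least the total weight covered by the chain. -/
theorem path_dominates_chain (m : ℕ) (hm : 1 ≤ m) (w : Fin m × Fin m → NNReal)
    (F : Finset (Finset (Fin m × Fin m))) (hseg : ∀ A ∈ F, IsSegment m A)
    (hpair : ∀ A ∈ F, ∀ B ∈ F, A ≠ B → Precedes m A B ∨ Precedes m B A) :
    ∃ (k : ℕ) (p : Fin (k + 1) → Fin m × Fin m), IsMonotonePath m k p ∧
      ∑ c ∈ F.sup id, w c ≤ ∑ i : Fin (k + 1), w (p i) := by
  obtain ⟨n, rfl⟩ : ∃ n, m = n + 1 := ⟨m - 1, by omega⟩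
  have hT := isChain_sup_of_precedes hseg hpair
  have ha := isStaircase_chainRow n (F.sup id)
  exact ⟨2 * n, staircasePath n (chainRow n (F.sup id)), ha.isMonotonePath,
    Finset.sum_le_sum_comp_of_subset_range w ha.injective_staircasePath
      fun q hq => ha.mem_range_staircasePath (chainRow_add_eq hT hq)⟩
end

section
/- The score of any set of pairwise non-conflicting segments is at most the score of the table, i.e., at most the maximum value of a monotone lattice path from the bottom-left to the top-right corner. -/
/-- The score of the table: the maximum weight of a monotone corner-to-corner path. -/
noncomputable def tableScore (m : ℕ) (w : Fin m × Fin m → NNReal) : NNReal :=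
  sSup {v : NNReal | ∃ (k : ℕ) (p : Fin (k + 1) → Fin m × Fin m),
    IsMonotonePath m k p ∧ v = ∑ i : Fin (k + 1), w (p i)}

lemma path_coord_sum {m k : ℕ} {p : Fin (k + 1) → Fin m × Fin m}
    (h : IsMonotonePath m k p) (i : Fin (k + 1)) :
    (p i).1.val + (p i).2.val = i.val := by
  induction i using Fin.induction with
  | zero => simp [h.1, h.2.1]
  | succ j ih =>
    have hc : (j.castSucc : Fin (k+1)).val = j.val := rfl
    have hs : (j.succ : Fin (k+1)).val = j.val + 1 := rfl
    rcases h.2.2.2.2 j with ⟨h1, h2⟩ | ⟨h1, h2⟩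
    · have h2' : (p j.succ).2.val = (p j.castSucc).2.val := by rw [h2]
      omega
    · have h1' : (p j.succ).1.val = (p j.castSucc).1.val := by rw [h1]
      omega

lemma path_sum_le_total {m : ℕ} (w : Fin m × Fin m → NNReal) {k : ℕ}
    {p : Fin (k + 1) → Fin m × Fin m} (h : IsMonotonePath m k p) :
    ∑ i : Fin (k + 1), w (p i) ≤ ∑ c : Fin m × Fin m, w c := by
  have hinj : Function.Injective p := by
    intro i j hij
    have h1 := path_coord_sum h i
    have h2 := path_coord_sum h j
    rw [hij] at h1
    exact Fin.ext (by omega)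
  calc ∑ i : Fin (k + 1), w (p i)
      = ∑ c ∈ Finset.univ.image p, w c :=
        (Finset.sum_image (fun a _ b _ hab => hinj hab)).symm
    _ ≤ ∑ c : Fin m × Fin m, w c :=
        Finset.sum_le_sum_of_subset (Finset.subset_univ _)

/-- The score of any set of pairwise non-conflicting segments is at most the score
of the table. -/
theorem chain_score_le_table_score (m : ℕ) (hm : 1 ≤ m) (w : Fin m × Fin m → NNReal)
    (F : Finset (Finset (Fin m × Fin m))) (hseg : ∀ A ∈ F, IsSegment m A)
    (hpair : ∀ A ∈ F, ∀ B ∈ F, A ≠ B → Precedes m A B ∨ Precedes m B A) :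
    ∑ c ∈ F.sup id, w c ≤ tableScore m w := by
  classical
  set S := F.sup id with hS
  -- the union of the segments is a chain in the componentwise order
  have hchain : ∀ x ∈ S, ∀ y ∈ S,
      (x.1.val ≤ y.1.val ∧ x.2.val ≤ y.2.val) ∨
      (y.1.val ≤ x.1.val ∧ y.2.val ≤ x.2.val) := by
    intro x hx y hy
    rw [hS, Finset.mem_sup] at hx hy
    obtain ⟨A, hA, hxA⟩ := hx
    obtain ⟨B, hB, hyB⟩ := hy
    simp only [id] at hxA hyB
    by_cases hAB : A = B
    · subst hAB
      obtain ⟨-, hrow | hcol⟩ := hseg A hA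
      · obtain ⟨rr, lo, hi, rfl⟩ := hrow
        simp only [Finset.mem_image] at hxA hyB
        obtain ⟨cx, -, rfl⟩ := hxA
        obtain ⟨cy, -, rfl⟩ := hyB
        rcases le_total cx.val cy.val with h | h
        · exact Or.inl ⟨le_refl _, h⟩
        · exact Or.inr ⟨le_refl _, h⟩
      · obtain ⟨cc, lo, hi, rfl⟩ := hcol
        simp only [Finset.mem_image] at hxA hyB
        obtain ⟨rx, -, rfl⟩ := hxA
        obtain ⟨ry, -, rfl⟩ := hyB
        rcases le_total rx.val ry.val with h | h
        · exact Or.inl ⟨h, le_refl _⟩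
        · exact Or.inr ⟨h, le_refl _⟩
    · rcases hpair A hA B hB hAB with h | h
      · have := h x hxA y hyB
        exact Or.inr ⟨this.1.le, this.2.le⟩
      · have := h y hyB x hxA
        exact Or.inl ⟨this.1.le, this.2.le⟩
  set k := 2 * (m - 1) with hk
  set r : ℕ → ℕ :=
    fun t => max (t - (m - 1)) (S.sup fun c => min c.1.val (t - c.2.val)) with hr
  have hrlow : ∀ t, t - (m - 1) ≤ r t := fun t => le_max_left _ _
  have hrt : ∀ t, r t ≤ t := by
    intro t
    refine max_le (Nat.sub_le _ _) (Finset.sup_le fun c _ => ?_)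
    exact le_trans (min_le_right _ _) (Nat.sub_le _ _)
  have hrm : ∀ t, t ≤ k → r t ≤ m - 1 := by
    intro t ht
    refine max_le (by omega) (Finset.sup_le fun c _ => ?_)
    have := c.1.isLt
    exact le_trans (min_le_left _ _) (by omega)
  have hr0 : r 0 = 0 := by
    have : r 0 ≤ 0 := by
      refine max_le (by omega) (Finset.sup_le fun c _ => ?_)
      exact le_trans (min_le_right _ _) (by omega)
    omega
  have hrk : r k = m - 1 := by
    have h1 := hrm k le_rfl
    have h2 := hrlow k
    omega
  have hstep : ∀ t, r t ≤ r (t + 1) ∧ r (t + 1) ≤ r t + 1 := by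
    intro t
    constructor
    · refine max_le (by have := hrlow (t + 1); omega) (Finset.sup_le fun c hc => ?_)
      refine le_trans ?_ (le_max_right _ _)
      refine le_trans ?_ (Finset.le_sup (f := fun c => min c.1.val (t + 1 - c.2.val)) hc)
      omega
    · refine max_le (by have := hrlow t; omega) (Finset.sup_le fun c hc => ?_)
      have hle : min c.1.val (t - c.2.val) ≤ r t :=
        le_trans (Finset.le_sup (f := fun c => min c.1.val (t - c.2.val)) hc)
          (le_max_right _ _)
      omega
  have hcell : ∀ c ∈ S, r (c.1.val + c.2.val) = c.1.val := by
    intro c hc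
    have hge : c.1.val ≤ r (c.1.val + c.2.val) := by
      refine le_trans ?_ (le_max_right _ _)
      refine le_trans ?_
        (Finset.le_sup (f := fun c' => min c'.1.val (c.1.val + c.2.val - c'.2.val)) hc)
      omega
    have hle : r (c.1.val + c.2.val) ≤ c.1.val := by
      refine max_le (by have := c.2.isLt; omega) (Finset.sup_le fun c' hc' => ?_)
      rcases hchain c' hc' c hc with ⟨h1, h2⟩ | ⟨h1, h2⟩
      · exact le_trans (min_le_left _ _) h1
      · exact le_trans (min_le_right _ _) (by omega)
    omega
  -- the path
  set p : Fin (k + 1) → Fin m × Fin m := fun t =>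
    (⟨r t.val, by have := hrm t.val (by omega); omega⟩,
     ⟨t.val - r t.val, by have := hrlow t.val; have := t.isLt; omega⟩) with hp
  have hpath : IsMonotonePath m k p := by
    refine ⟨?_, ?_, ?_, ?_, ?_⟩
    · simpa [hp] using hr0
    · simp [hp, hr0]
    · simpa [hp, Fin.last] using hrk
    · simp [hp, Fin.last, hrk]; omega
    · intro i
      have hs := hstep i.val
      have hc : (i.castSucc : Fin (k+1)).val = i.val := rfl
      have hsu : (i.succ : Fin (k+1)).val = i.val + 1 := rfl
      by_cases h : r (i.val + 1) = r i.val
      · right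
        constructor
        · apply Fin.ext; simp [hp, hc, hsu, h]
        · simp [hp, hc, hsu, h]
          have := hrt i.val; omega
      · left
        have h' : r (i.val + 1) = r i.val + 1 := by omega
        constructor
        · simp [hp, hc, hsu, h']
        · apply Fin.ext; simp [hp, hc, hsu, h']
  have hmem : (∑ i : Fin (k + 1), w (p i)) ∈
      {v : NNReal | ∃ (k : ℕ) (p : Fin (k + 1) → Fin m × Fin m),
        IsMonotonePath m k p ∧ v = ∑ i : Fin (k + 1), w (p i)} :=
    ⟨k, p, hpath, rfl⟩
  have hbdd : BddAbove {v : NNReal | ∃ (k : ℕ) (p : Fin (k + 1) → Fin m × Fin m),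
      IsMonotonePath m k p ∧ v = ∑ i : Fin (k + 1), w (p i)} := by
    refine ⟨∑ c : Fin m × Fin m, w c, ?_⟩
    rintro v ⟨k', q, hq, rfl⟩
    exact path_sum_le_total w hq
  have hsub : S ⊆ Finset.univ.image p := by
    intro c hc
    have h1 := c.1.isLt
    have h2 := c.2.isLt
    have hle : c.1.val + c.2.val < k + 1 := by omega
    refine Finset.mem_image.mpr ⟨⟨c.1.val + c.2.val, hle⟩, Finset.mem_univ _, ?_⟩
    have hcv := hcell c hc
    apply Prod.ext
    · apply Fin.ext; simpa [hp] using hcv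
    · apply Fin.ext; simp [hp]; omega
  have hinj : ∀ a ∈ (Finset.univ : Finset (Fin (k+1))), ∀ b ∈ Finset.univ,
      p a = p b → a = b := by
    intro a _ b _ hab
    have h1 := path_coord_sum hpath a
    have h2 := path_coord_sum hpath b
    rw [hab] at h1
    exact Fin.ext (by omega)
  calc ∑ c ∈ S, w c ≤ ∑ c ∈ Finset.univ.image p, w c :=
        Finset.sum_le_sum_of_subset hsub
    _ = ∑ i : Fin (k + 1), w (p i) := Finset.sum_image hinj
    _ ≤ tableScore m w := le_csSup hbdd hmem
end

section
/- Dilworth-type bound: a permutation of [n] can be partitioned into exactly L decreasing subsequences, where L is the length of its longest increasing subsequence (patience sorting pile decomposition). -/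
/-- Dilworth-type bound: an injective sequence with longest increasing subsequence
length `L` can be partitioned into exactly `L` strictly decreasing subsequences. -/
theorem partition_into_lis_many_decreasing (n : ℕ) (a : Fin n → ℝ)
    (ha : Function.Injective a) (L : ℕ)
    (hL : IsGreatest {k | ∃ T : Finset (Fin n), T.card = k ∧ StrictMonoOn a ↑T} L) :
    ∃ P : Fin L → Finset (Fin n),
      (∀ i j, i ≠ j → Disjoint (P i) (P j)) ∧
      (Finset.univ.biUnion P = Finset.univ) ∧
      (∀ i, StrictAntiOn a ↑(P i)) := by
  classical
  -- Q i k : there is an increasing subsequence of length k ending at i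
  set Q : Fin n → ℕ → Prop := fun i k =>
    ∃ T : Finset (Fin n), T.card = k ∧ StrictMonoOn a ↑T ∧ i ∈ T ∧ ∀ j ∈ T, j ≤ i with hQdef
  set f : Fin n → ℕ := fun i => Nat.findGreatest (Q i) L with hfdef
  have hQ1 : ∀ i, Q i 1 := by
    intro i
    refine ⟨{i}, by simp, ?_, by simp, by simp⟩
    intro x hx y hy hxy
    simp only [Finset.coe_singleton, Set.mem_singleton_iff] at hx hy
    subst hx; subst hy; exact absurd hxy (lt_irrefl _)
  have hQle : ∀ i k, Q i k → k ≤ L := by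
    rintro i k ⟨T, hc, hm, -, -⟩
    exact hL.2 ⟨T, hc, hm⟩
  have hL1 : ∀ _ : Fin n, 1 ≤ L := fun i => hQle i 1 (hQ1 i)
  have hfspec : ∀ i, Q i (f i) := fun i => Nat.findGreatest_spec (hL1 i) (hQ1 i)
  have hf1 : ∀ i, 1 ≤ f i := fun i => Nat.le_findGreatest (hL1 i) (hQ1 i)
  have hfL : ∀ i, f i ≤ L := fun i => Nat.findGreatest_le L
  -- key monotonicity
  have key : ∀ i j : Fin n, i < j → a i < a j → f i < f j := by
    intro i j hij haij
    obtain ⟨T, hc, hm, hiT, hle⟩ := hfspec i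
    have hjT : j ∉ T := fun h => absurd (hle j h) (not_le.mpr hij)
    have hQj : Q j (f i + 1) := by
      refine ⟨insert j T, by rw [Finset.card_insert_of_notMem hjT, hc], ?_,
        Finset.mem_insert_self _ _, ?_⟩
      · intro x hx y hy hxy
        simp only [Finset.coe_insert, Set.mem_insert_iff, Finset.mem_coe] at hx hy
        rcases hx with rfl | hx
        · rcases hy with rfl | hy
          · exact absurd hxy (lt_irrefl _)
          · exact absurd (lt_of_lt_of_le hxy ((hle y hy).trans hij.le)) (lt_irrefl _)
        · rcases hy with rfl | hy
          · have hxi : a x ≤ a i := by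
              rcases eq_or_lt_of_le (hle x hx) with h | h
              · exact le_of_eq (by rw [h])
              · exact (hm hx hiT h).le
            exact lt_of_le_of_lt hxi haij
          · exact hm hx hy hxy
      · intro x hx
        rcases Finset.mem_insert.mp hx with rfl | hx
        · exact le_refl _
        · exact (hle x hx).trans hij.le
    have : f i + 1 ≤ f j := Nat.le_findGreatest (hQle j _ hQj) hQj
    omega
  refine ⟨fun k => Finset.univ.filter (fun i => f i = (k : ℕ) + 1), ?_, ?_, ?_⟩
  · intro k₁ k₂ hne
    rw [Finset.disjoint_left]
    intro x hx₁ hx₂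
    simp only [Finset.mem_filter] at hx₁ hx₂
    exact hne (Fin.ext (by omega))
  · ext i
    simp only [Finset.mem_biUnion, Finset.mem_univ, Finset.mem_filter, true_and,
      iff_true, true_iff]
    exact ⟨⟨f i - 1, by have := hf1 i; have := hfL i; omega⟩, by
      have := hf1 i; simp; omega⟩
  · intro k x hx y hy hxy
    simp only [Finset.coe_filter, Set.mem_setOf_eq, Finset.mem_univ, true_and] at hx hy
    have hne : a x ≠ a y := fun h => absurd (ha h) (ne_of_lt hxy)
    rcases lt_or_gt_of_ne hne with h | h
    · exact absurd (key x y hxy h) (by omega)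
    · exact h
end

section
/- Lower bound on partition size: there exist sequences of n distinct reals for which any partition into monotone subsequences requires at least ⌈√n⌉ parts. -/
noncomputable def lbSeq (k : ℕ) : Fin (k ^ 2) → ℝ :=
  fun i => (((i : ℕ) % k : ℕ) : ℝ) - (k : ℝ) * (((i : ℕ) / k : ℕ) : ℝ)

lemma lbSeq_lt_same_block {k : ℕ} {i i' : Fin (k ^ 2)}
    (hq : (i : ℕ) / k = (i' : ℕ) / k) (hr : (i : ℕ) % k < (i' : ℕ) % k) :
    lbSeq k i < lbSeq k i' := by
  unfold lbSeq
  rw [hq]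
  have : (((i : ℕ) % k : ℕ) : ℝ) < (((i' : ℕ) % k : ℕ) : ℝ) := by exact_mod_cast hr
  linarith

lemma lbSeq_lt_block_lt {k : ℕ} {i i' : Fin (k ^ 2)}
    (hq : (i : ℕ) / k < (i' : ℕ) / k) :
    lbSeq k i' < lbSeq k i := by
  have hk : 0 < k := by
    rcases Nat.eq_zero_or_pos k with h | h
    · simp [h] at hq
    · exact h
  unfold lbSeq
  have h1 : (((i' : ℕ) % k : ℕ) : ℝ) < (k : ℝ) := by
    exact_mod_cast Nat.mod_lt _ hk
  have h2 : (((i : ℕ) / k : ℕ) : ℝ) + 1 ≤ (((i' : ℕ) / k : ℕ) : ℝ) := by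
    exact_mod_cast hq
  have h3 : (0 : ℝ) ≤ (((i : ℕ) % k : ℕ) : ℝ) := by positivity
  have h4 : (k : ℝ) * ((((i : ℕ) / k : ℕ) : ℝ) + 1) ≤ (k : ℝ) * (((i' : ℕ) / k : ℕ) : ℝ) :=
    mul_le_mul_of_nonneg_left h2 (by positivity)
  nlinarith

lemma lbSeq_inj (k : ℕ) : Function.Injective (lbSeq k) := by
  intro i i' h
  by_contra hne
  have hne' : (i : ℕ) ≠ (i' : ℕ) := fun h' => hne (Fin.ext h')
  rcases lt_trichotomy ((i : ℕ) / k) ((i' : ℕ) / k) with hq | hq | hq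
  · exact absurd h (ne_of_gt (lbSeq_lt_block_lt hq))
  · rcases lt_trichotomy ((i : ℕ) % k) ((i' : ℕ) % k) with hr | hr | hr
    · exact absurd h (ne_of_lt (lbSeq_lt_same_block hq hr))
    · have e1 := Nat.div_add_mod (i : ℕ) k
      have e2 := Nat.div_add_mod (i' : ℕ) k
      rw [hq, hr] at e1
      exact hne' (e1.symm.trans e2)
    · exact absurd h (ne_of_gt (lbSeq_lt_same_block hq.symm hr))
  · exact absurd h (ne_of_lt (lbSeq_lt_block_lt hq))

lemma lbSeq_card_le {k : ℕ} (hk : 0 < k) (S : Finset (Fin (k ^ 2)))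
    (hmono : StrictMonoOn (lbSeq k) ↑S ∨ StrictAntiOn (lbSeq k) ↑S) :
    S.card ≤ k := by
  have hrange : (Finset.range k).card = k := Finset.card_range k
  rcases hmono with hm | hm
  · -- increasing: i ↦ i % k is injective on S
    have hcard : S.card ≤ (Finset.range k).card := by
      refine Finset.card_le_card_of_injOn (fun i => (i : ℕ) % k) ?_ ?_
      · intro i _
        exact Finset.mem_range.mpr (Nat.mod_lt _ hk)
      · have key : ∀ i ∈ S, ∀ i' ∈ S, (i : ℕ) < (i' : ℕ) →
            (i : ℕ) % k = (i' : ℕ) % k → False := by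
          intro i hi i' hi' hlt heq
          have hqle : (i : ℕ) / k ≤ (i' : ℕ) / k := Nat.div_le_div_right hlt.le
          have hq : (i : ℕ) / k < (i' : ℕ) / k := by
            rcases lt_or_eq_of_le hqle with h' | h'
            · exact h'
            · exfalso
              have e1 := Nat.div_add_mod (i : ℕ) k
              have e2 := Nat.div_add_mod (i' : ℕ) k
              rw [h', heq] at e1
              exact absurd (e1.symm.trans e2) (Nat.ne_of_lt hlt)
          have h1 : lbSeq k i' < lbSeq k i := lbSeq_lt_block_lt hq
          have h2 : lbSeq k i < lbSeq k i' := hm hi hi' (Fin.lt_def.mpr hlt)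
          linarith
        intro i hi i' hi' heq
        simp only [Finset.mem_coe] at hi hi'
        rcases lt_trichotomy ((i : ℕ)) ((i' : ℕ)) with hlt | he | hlt
        · exact absurd heq (fun h => key i hi i' hi' hlt h)
        · exact Fin.ext he
        · exact absurd heq.symm (fun h => key i' hi' i hi hlt h)
    exact hcard.trans_eq hrange
  · -- decreasing: i ↦ i / k is injective on S
    have hcard : S.card ≤ (Finset.range k).card := by
      refine Finset.card_le_card_of_injOn (fun i => (i : ℕ) / k) ?_ ?_
      · intro i _
        apply Finset.mem_range.mpr
        apply Nat.div_lt_of_lt_mul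
        have := i.isLt
        simpa [pow_two] using this
      · have key : ∀ i ∈ S, ∀ i' ∈ S, (i : ℕ) < (i' : ℕ) →
            (i : ℕ) / k = (i' : ℕ) / k → False := by
          intro i hi i' hi' hlt heq
          have hr : (i : ℕ) % k < (i' : ℕ) % k := by
            have e1 := Nat.div_add_mod (i : ℕ) k
            have e2 := Nat.div_add_mod (i' : ℕ) k
            rw [heq] at e1
            have : k * ((i' : ℕ) / k) + (i : ℕ) % k < k * ((i' : ℕ) / k) + (i' : ℕ) % k := by
              rw [e1, e2]; exact hlt
            exact Nat.lt_of_add_lt_add_left this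
          have h1 : lbSeq k i < lbSeq k i' := lbSeq_lt_same_block heq hr
          have h2 : lbSeq k i' < lbSeq k i := hm hi hi' (Fin.lt_def.mpr hlt)
          linarith
        intro i hi i' hi' heq
        simp only [Finset.mem_coe] at hi hi'
        rcases lt_trichotomy ((i : ℕ)) ((i' : ℕ)) with hlt | he | hlt
        · exact absurd heq (fun h => key i hi i' hi' hlt h)
        · exact Fin.ext he
        · exact absurd heq.symm (fun h => key i' hi' i hi hlt h)

    exact hcard.trans_eq hrange
/-- Lower bound: for `n = k²` there is a sequence of `n` distinct reals such that any
partition into monotone (strictly increasing or strictly decreasing) subsequences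
needs at least `⌈√n⌉` parts. -/
theorem partition_lower_bound (k : ℕ) :
    ∃ a : Fin (k ^ 2) → ℝ, Function.Injective a ∧
      ∀ (j : ℕ) (P : Fin j → Finset (Fin (k ^ 2))),
        (∀ i i', i ≠ i' → Disjoint (P i) (P i')) →
        (Finset.univ.biUnion P = Finset.univ) →
        (∀ i, StrictMonoOn a ↑(P i) ∨ StrictAntiOn a ↑(P i)) →
        ⌈Real.sqrt ((k ^ 2 : ℕ))⌉₊ ≤ j := by
  refine ⟨lbSeq k, lbSeq_inj k, ?_⟩
  intro j P hdisj hcover hmono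
  have hsqrt : Real.sqrt ((k ^ 2 : ℕ) : ℝ) = (k : ℝ) := by
    push_cast
    rw [Real.sqrt_sq (by positivity)]
  rw [hsqrt, Nat.ceil_natCast]
  rcases Nat.eq_zero_or_pos k with hk | hk
  · simp [hk]
  · -- counting argument
    have hcard : k ^ 2 = ∑ i : Fin j, (P i).card := by
      have h1 : (Finset.univ : Finset (Fin (k ^ 2))).card = k ^ 2 := by simp
      have h2 : (Finset.univ.biUnion P).card = ∑ i : Fin j, (P i).card :=
        Finset.card_biUnion (fun i _ i' _ h => hdisj i i' h)
      rw [hcover, h1] at h2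
      omega
    have hle : ∑ i : Fin j, (P i).card ≤ j * k := by
      calc ∑ i : Fin j, (P i).card ≤ ∑ _i : Fin j, k :=
            Finset.sum_le_sum fun i _ => lbSeq_card_le hk (P i) (hmono i)
        _ = j * k := by simp [Finset.sum_const, mul_comm]
    have : k * k ≤ j * k := by
      rw [← pow_two]; omega
    exact Nat.le_of_mul_le_mul_right this hk
end
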